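/- Let ℤ² act freely on a Polish space X by a Borel action. Then there exists a Borel minimal regulated partition of X: a partition 𝒫 of X such that each element of 𝒫 has the form S·x = {g·x : g ∈ S} for some x ∈ X and some 2-dimensional rectangle S in ℤ², such that for every g ∈ ℤ² the set {x ∈ X : x and g·x belong to the same element of 𝒫} is Borel, and such that for every x ∈ X the induced partition {S ⊆ ℤ² : S·x ∈ 𝒫} of ℤ² is 3-regulated. -/

import Mathlib

/-- A rectangle in `ℤ²`. -/
def IsZRect (S : Set (Fin 2 → ℤ)) : Prop :=
  ∃ a b : Fin 2 → ℤ, (∀ i, a i ≤ b i) ∧ S = Set.Icc a b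

/-- `C_S ⊆ ℝ²`: the union over `x ∈ S` of the unit squares centered at `x`. -/
def CubeSet (S : Set (Fin 2 → ℤ)) : Set (Fin 2 → ℝ) :=
  {y | ∃ x ∈ S, ∀ i, |y i - (x i : ℝ)| ≤ 1 / 2}

/-!
The partition consists of horizontal segments: every line `ℤ • e₁ +ᵥ x` is cut just before each
of its points in a Borel set `B` that meets every line unboundedly in both directions and contains
no two vertically adjacent points. Four pieces can only meet around a unit square whose two
horizontal edges are both cut, which would put two vertically adjacent points into `B`.

To build `B`, take a Borel maximal set `M` of markers at horizontal distance at least `5` from each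
other and move each marker `x` to the right by `s x ∈ {0, 1, 2}`. A marker sees at most one marker
within horizontal distance `2` on the line above and one on the line below, so at most two shifts
are forbidden and `s` can be chosen greedily along a countable Borel proper colouring; such a
colouring exists because the action is free and `X` is second countable.
-/

open Set
open scoped Interval Pointwise

section Coloring

variable {X : Type*} [TopologicalSpace X] [SecondCountableTopology X] [T1Space X]
  [MeasurableSpace X] [OpensMeasurableSpace X]

theorem exists_measurable_coloring_of_ne {ι : Type*} [Finite ι] {f : ι → X → X}
    (hf : ∀ i, Measurable (f i)) (hne : ∀ i x, f i x ≠ x) :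
    ∃ γ : X → ℕ, Measurable γ ∧ ∀ i x, γ (f i x) ≠ γ x := by
  classical
  obtain ⟨U, hU⟩ := TopologicalSpace.exists_seq_basis X
  have hUm : ∀ n, MeasurableSet (U n) := fun n => (hU.isOpen (mem_range_self n)).measurableSet
  -- colour `x` by the first basic open set containing `x` but none of the points `f i x`
  have hex : ∀ x, ∃ n, x ∈ U n ∧ ∀ i, f i x ∉ U n := by
    intro x
    have hx : x ∈ (range fun i => f i x)ᶜ := by simpa using fun i => hne i x
    obtain ⟨_, ⟨n, rfl⟩, hxn, hsub⟩ :=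
      hU.exists_subset_of_mem_open hx (finite_range _).isClosed.isOpen_compl
    exact ⟨n, hxn, fun i hi => hsub hi ⟨i, rfl⟩⟩
  refine ⟨fun x => Nat.find (hex x), measurable_find hex fun n => ?_, fun i x h => ?_⟩
  · have : {x | x ∈ U n ∧ ∀ i, f i x ∉ U n} = U n ∩ ⋂ i, f i ⁻¹' (U n)ᶜ := by ext; simp
    rw [this]
    exact (hUm n).inter (.iInter fun i => hf i (hUm n).compl)
  · have hfx := (Nat.find_spec (hex (f i x))).1
    simp only at h
    rw [h] at hfx
    exact (Nat.find_spec (hex x)).2 i hfx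

end Coloring

section Greedy

variable {X : Type*} (γ : X → ℕ) (rule : ℕ → (X → ℕ) → X → ℕ)

noncomputable def greedyStage : ℕ → X → ℕ
  | 0 => fun _ => 0
  | n + 1 => fun x => if γ x = n then rule n (greedyStage n) x else greedyStage n x

noncomputable def greedyLabel (x : X) : ℕ := greedyStage γ rule (γ x + 1) x

variable {γ rule}

theorem greedyStage_eq_greedyLabel {n : ℕ} {x : X} (hx : γ x < n) :
    greedyStage γ rule n x = greedyLabel γ rule x := by
  induction n with
  | zero => omega
  | succ n ih =>
    rcases (Nat.lt_succ_iff.mp hx).lt_or_eq with h | h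
    · simp only [greedyStage, h.ne, if_false, ih h]
    · rw [← h]
      rfl

theorem greedyLabel_eq
    (hrule : ∀ n ℓ ℓ' x, (∀ z, γ z < n → ℓ z = ℓ' z) → rule n ℓ x = rule n ℓ' x) (x : X) :
    greedyLabel γ rule x = rule (γ x) (greedyLabel γ rule) x := by
  simp only [greedyLabel, greedyStage, if_pos]
  exact hrule _ _ _ _ fun z hz => greedyStage_eq_greedyLabel hz

theorem measurable_greedyLabel [MeasurableSpace X] (hγ : Measurable γ)
    (hrule : ∀ n ℓ, Measurable ℓ → Measurable (rule n ℓ)) : Measurable (greedyLabel γ rule) := by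
  have hstage : ∀ n, Measurable (greedyStage γ rule n) := by
    intro n
    induction n with
    | zero => exact measurable_const
    | succ n ih => exact Measurable.ite (hγ (measurableSet_singleton n)) (hrule n _ ih) ih
  exact (measurable_from_prod_countable_left (f := fun p : X × ℕ => greedyStage γ rule p.2 p.1)
    hstage).comp (measurable_id.prodMk (hγ.add_const 1))

end Greedy

section Markers

variable {G X : Type*} [AddGroup G] [AddAction G X] [MeasurableSpace X]
  [MeasurableConstVAdd G X]

theorem exists_measurableSet_maximal_independent {V : Finset G} (hV : ∀ v ∈ V, -v ∈ V)
    {γ : X → ℕ} (hγm : Measurable γ) (hγ : ∀ x, ∀ v ∈ V, γ (v +ᵥ x) ≠ γ x) :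
    ∃ M : Set X, MeasurableSet M ∧ (∀ x ∈ M, ∀ v ∈ V, v +ᵥ x ∉ M) ∧
      ∀ x ∉ M, ∃ v ∈ V, v +ᵥ x ∈ M := by
  -- a point joins `M` unless a neighbour of smaller colour already has
  set ℓ := greedyLabel γ fun n ℓ x => if ∃ v ∈ V, γ (v +ᵥ x) < n ∧ ℓ (v +ᵥ x) = 1 then 0 else 1
  have hℓ (x : X) : ℓ x = if ∃ v ∈ V, γ (v +ᵥ x) < γ x ∧ ℓ (v +ᵥ x) = 1 then 0 else 1 :=
    greedyLabel_eq (fun n ℓ ℓ' x h => by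
      refine if_congr (exists_congr fun v => and_congr_right fun _ => ?_) rfl rfl
      exact and_congr_right fun hv => by rw [h _ hv]) x
  have hℓm : Measurable ℓ := measurable_greedyLabel hγm fun n ℓ hℓ => by
    refine Measurable.ite ?_ measurable_const measurable_const
    have : {x | ∃ v ∈ V, γ (v +ᵥ x) < n ∧ ℓ (v +ᵥ x) = 1} =
        ⋃ v ∈ V, (v +ᵥ ·) ⁻¹' ({z | γ z < n} ∩ ℓ ⁻¹' {1}) := by
      ext; simp [and_left_comm]
    rw [this]
    exact .biUnion V.countable_toSet fun v _ => measurable_const_vadd v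
      ((hγm measurableSet_Iio).inter (hℓ (.singleton 1)))
  refine ⟨{x | ℓ x = 1}, hℓm (.singleton 1), fun x hx v hv hvx => ?_, fun x hx => ?_⟩
  · change ℓ x = 1 at hx
    change ℓ (v +ᵥ x) = 1 at hvx
    rcases (hγ x v hv).lt_or_gt with h | h
    · rw [hℓ, if_pos ⟨v, hv, h, hvx⟩] at hx
      exact zero_ne_one hx
    · rw [hℓ, if_pos ⟨-v, hV v hv, by rwa [neg_vadd_vadd], by rwa [neg_vadd_vadd]⟩] at hvx
      exact zero_ne_one hvx
  · change ℓ x ≠ 1 at hx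
    rw [hℓ] at hx
    obtain ⟨v, hv, -, hvx⟩ := not_not.mp fun h => hx (if_neg h)
    exact ⟨v, hv, hvx⟩

end Markers

section FirstFree

open Classical in
noncomputable def firstFree (F : Set ℕ) : ℕ := if 0 ∉ F then 0 else if 1 ∉ F then 1 else 2

theorem firstFree_le_two (F : Set ℕ) : firstFree F ≤ 2 := by
  unfold firstFree
  split_ifs <;> omega

theorem firstFree_notMem_union {A B : Set ℕ} (hA : A.Subsingleton) (hB : B.Subsingleton) :
    firstFree (A ∪ B) ∉ A ∪ B := by
  unfold firstFree
  split_ifs <;> first | assumption | grind [Set.Subsingleton]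

theorem measurable_firstFree {X : Type*} [MeasurableSpace X] {F : X → Set ℕ}
    (hF : ∀ w, MeasurableSet {x | w ∈ F x}) : Measurable fun x => firstFree (F x) :=
  Measurable.ite (hF 0).compl measurable_const
    (Measurable.ite (hF 1).compl measurable_const measurable_const)

end FirstFree

section Shifts

variable {G X : Type*} [AddCommGroup G] [AddAction G X]

/-- `w` is forbidden at `x` if some marker `z = (t • e + g) +ᵥ x` with `|t| ≤ 2` and colour `< n`,
moved by `ℓ z • e`, lands on `g +ᵥ w • e +ᵥ x`. -/
def forbiddenLabels (M : Set X) (e g : G) (γ : X → ℕ) (n : ℕ) (ℓ : X → ℕ) (x : X) : Set ℕ :=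
  {w | ∃ t : ℤ, |t| ≤ 2 ∧ (t • e + g) +ᵥ x ∈ M ∧ γ ((t • e + g) +ᵥ x) < n ∧
    (w : ℤ) = ℓ ((t • e + g) +ᵥ x) + t}

variable {M : Set X} {e g : G} {γ : X → ℕ} {n : ℕ} {ℓ ℓ' : X → ℕ}

theorem forbiddenLabels_subsingleton (hM : ∀ x ∈ M, ∀ k : ℤ, k ≠ 0 → |k| ≤ 4 → k • e +ᵥ x ∉ M)
    (x : X) : (forbiddenLabels M e g γ n ℓ x).Subsingleton := by
  rintro w ⟨t, ht, hz, -, hw⟩ w' ⟨t', ht', hz', -, hw'⟩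
  obtain rfl : t = t' := by
    by_contra hne
    rw [abs_le] at ht ht'
    refine hM _ hz (t' - t) (sub_ne_zero.2 (Ne.symm hne)) (abs_le.2 ⟨by omega, by omega⟩) ?_
    rwa [vadd_vadd, ← add_assoc, ← add_zsmul, sub_add_cancel]
  omega

theorem forbiddenLabels_congr (h : ∀ z, γ z < n → ℓ z = ℓ' z) (x : X) :
    forbiddenLabels M e g γ n ℓ x = forbiddenLabels M e g γ n ℓ' x := by
  ext w
  refine exists_congr fun t => and_congr_right fun _ => and_congr_right fun _ => ?_
  exact and_congr_right fun hz => by rw [h _ hz]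

theorem measurableSet_setOf_mem_forbiddenLabels [MeasurableSpace X] [MeasurableConstVAdd G X]
    (hMm : MeasurableSet M) (hγm : Measurable γ) (hℓ : Measurable ℓ) (w : ℕ) :
    MeasurableSet {x | w ∈ forbiddenLabels M e g γ n ℓ x} := by
  have : {x | w ∈ forbiddenLabels M e g γ n ℓ x} = ⋃ t : ℤ, ⋃ _ : |t| ≤ 2,
      (fun z => (t • e + g) +ᵥ z) ⁻¹' (M ∩ {z | γ z < n} ∩ ℓ ⁻¹' {m | (w : ℤ) = m + t}) := by
    ext
    simp only [forbiddenLabels, mem_iUnion, mem_preimage, mem_inter_iff, exists_prop, and_assoc]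
    rfl
  rw [this]
  exact .iUnion fun t => .iUnion fun _ => measurable_const_vadd _
    ((hMm.inter (hγm measurableSet_Iio)).inter (hℓ .of_discrete))

theorem exists_measurable_shift {f : G} [MeasurableSpace X] [MeasurableConstVAdd G X]
    (hMm : MeasurableSet M) (hM : ∀ x ∈ M, ∀ k : ℤ, k ≠ 0 → |k| ≤ 4 → k • e +ᵥ x ∉ M)
    (hγm : Measurable γ) (hγ : ∀ x, ∀ t : ℤ, |t| ≤ 2 → γ ((t • e + f) +ᵥ x) ≠ γ x) :
    ∃ s : X → ℕ, Measurable s ∧ (∀ x, s x ≤ 2) ∧ ∀ x ∈ M, ∀ t : ℤ, |t| ≤ 2 →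
      (t • e + f) +ᵥ x ∈ M → (s x : ℤ) ≠ s ((t • e + f) +ᵥ x) + t := by
  -- the marker above `x` forbids one label through `g = f`, the one below through `g = -f`
  set s := greedyLabel γ fun n ℓ x =>
    firstFree (forbiddenLabels M e f γ n ℓ x ∪ forbiddenLabels M e (-f) γ n ℓ x)
  have hs (x : X) : s x =
      firstFree (forbiddenLabels M e f γ (γ x) s x ∪ forbiddenLabels M e (-f) γ (γ x) s x) := by
    refine greedyLabel_eq (fun n ℓ ℓ' x h => ?_) x
    rw [forbiddenLabels_congr h, forbiddenLabels_congr h]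
  have hnot (x : X) : s x ∉
      forbiddenLabels M e f γ (γ x) s x ∪ forbiddenLabels M e (-f) γ (γ x) s x := by
    rw [hs]
    exact firstFree_notMem_union (forbiddenLabels_subsingleton hM x)
      (forbiddenLabels_subsingleton hM x)
  refine ⟨s, measurable_greedyLabel hγm fun n ℓ hℓ => measurable_firstFree fun w =>
      (measurableSet_setOf_mem_forbiddenLabels hMm hγm hℓ w).union
        (measurableSet_setOf_mem_forbiddenLabels hMm hγm hℓ w),
    fun x => (hs x).trans_le (firstFree_le_two _), fun x hx t ht hz hxz => ?_⟩
  rcases (hγ x t ht).lt_or_gt with h | h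
  · exact hnot x (Or.inl ⟨t, ht, hz, h, hxz⟩)
  · set z := (t • e + f) +ᵥ x
    have hzx : ((-t) • e + -f) +ᵥ z = x := by
      rw [vadd_vadd, neg_zsmul, ← neg_add, neg_add_cancel, zero_vadd]
    refine hnot z (Or.inr ⟨-t, by rwa [abs_neg], ?_, ?_, ?_⟩) <;> rw [hzx]
    · exact hx
    · exact h
    · omega

end Shifts

section CutSet

variable {G X : Type*} [AddCommGroup G] [AddAction G X] [MeasurableSpace X]
  [MeasurableConstVAdd G X]

theorem exists_measurableSet_cut_of_marker {e f : G} {M : Set X} (hMm : MeasurableSet M)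
    (hM : ∀ x ∈ M, ∀ k : ℤ, k ≠ 0 → |k| ≤ 4 → k • e +ᵥ x ∉ M)
    (hMdom : ∀ x, ∃ k : ℤ, |k| ≤ 4 ∧ k • e +ᵥ x ∈ M)
    {γ : X → ℕ} (hγm : Measurable γ) (hγ : ∀ x, ∀ t : ℤ, |t| ≤ 2 → γ ((t • e + f) +ᵥ x) ≠ γ x) :
    ∃ B : Set X, MeasurableSet B ∧ (∀ b ∈ B, f +ᵥ b ∉ B) ∧ ∀ x,
      (∃ k : ℤ, 0 < k ∧ k • e +ᵥ x ∈ B) ∧ ∃ k : ℤ, k ≤ 0 ∧ k • e +ᵥ x ∈ B := by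
  obtain ⟨s, hsm, hs2, hs⟩ := exists_measurable_shift hMm hM hγm hγ
  set B := ⋃ j : ℕ, (j : ℤ) • e +ᵥ (M ∩ s ⁻¹' {j})
  have hgap (x : X) : ∃ k : ℤ, -4 ≤ k ∧ k ≤ 6 ∧ k • e +ᵥ x ∈ B := by
    obtain ⟨k, hk, hkM⟩ := hMdom x
    have := hs2 (k • e +ᵥ x)
    rw [abs_le] at hk
    refine ⟨s (k • e +ᵥ x) + k, by omega, by omega, mem_iUnion.2 ⟨s (k • e +ᵥ x), ?_⟩⟩
    rw [add_zsmul, ← vadd_vadd]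
    exact vadd_mem_vadd_set ⟨hkM, rfl⟩
  refine ⟨B, .iUnion fun j => (hMm.inter (hsm (.singleton j))).const_vadd _, ?_, fun x => ⟨?_, ?_⟩⟩
  · simp only [B, mem_iUnion, Set.mem_vadd_set]
    rintro _ ⟨_, x, ⟨hx, rfl⟩, rfl⟩ ⟨_, z, ⟨hz, rfl⟩, hzx⟩
    have hzx' : z = ((s x - s z : ℤ) • e + f) +ᵥ x := calc
      z = -((s z : ℤ) • e) +ᵥ (s z : ℤ) • e +ᵥ z := (neg_vadd_vadd _ _).symm
      _ = _ := by rw [hzx, vadd_vadd, vadd_vadd, sub_zsmul]; abel_nf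
    have h2 := hs2 x
    have h2' := hs2 z
    refine hs x hx _ (abs_le.2 ⟨by omega, by omega⟩) (hzx' ▸ hz) ?_
    rw [← hzx']
    ring
  · obtain ⟨k, hk, -, hkB⟩ := hgap ((7 : ℤ) • e +ᵥ x)
    exact ⟨k + 7, by omega, by rwa [add_zsmul, ← vadd_vadd]⟩
  · obtain ⟨k, -, hk, hkB⟩ := hgap ((-6 : ℤ) • e +ᵥ x)
    exact ⟨k + -6, by omega, by rwa [add_zsmul, ← vadd_vadd]⟩

end CutSet

section Intervals

theorem Set.uIoc_subset_uIoc_union_uIoc {α : Type*} [LinearOrder α] (a b c : α) :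
    Ι a c ⊆ Ι a b ∪ Ι b c := by
  intro x hx
  simp only [mem_union, mem_uIoc] at hx ⊢
  rcases le_or_gt x b with h | h <;> tauto

theorem Set.disjoint_uIoc_trans {α : Type*} [LinearOrder α] {s : Set α} {a b c : α}
    (hab : Disjoint (Ι a b) s) (hbc : Disjoint (Ι b c) s) : Disjoint (Ι a c) s :=
  (hab.union_left hbc).mono_left (uIoc_subset_uIoc_union_uIoc a b c)

theorem Int.disjoint_uIoc_preimage_add_right (S : Set ℤ) (a b j : ℤ) :
    Disjoint (Ι a b) ((· + j) ⁻¹' S) ↔ Disjoint (Ι (a + j) (b + j)) S := by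
  simp only [Set.disjoint_left, mem_preimage, mem_uIoc]
  constructor
  · intro h k hk hkS
    exact h (a := k - j) (by omega) (by simpa using hkS)
  · intro h k hk hkS
    exact h (by omega) hkS

theorem Int.exists_setOf_disjoint_uIoc_eq_Icc {S : Set ℤ} (hpos : ∃ k ∈ S, 0 < k)
    (hnonpos : ∃ k ∈ S, k ≤ 0) : ∃ a b, a ≤ b ∧ {j | Disjoint (Ι 0 j) S} = Icc a b := by
  obtain ⟨b, ⟨hbS, hb0⟩, hbmin⟩ :=
    Int.exists_least_of_bdd (P := fun k => k ∈ S ∧ 0 < k) ⟨0, fun _ hz => hz.2.le⟩ hpos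
  obtain ⟨a, ⟨haS, ha0⟩, hamax⟩ :=
    Int.exists_greatest_of_bdd (P := fun k => k ∈ S ∧ k ≤ 0) ⟨0, fun _ hz => hz.2⟩ hnonpos
  refine ⟨a, b - 1, by omega, Set.ext fun j => ?_⟩
  simp only [mem_ofPred_eq, mem_Icc, Set.disjoint_right, mem_uIoc]
  constructor
  · intro h
    constructor
    · by_contra
      exact h haS (Or.inr ⟨by omega, ha0⟩)
    · by_contra
      exact h hbS (Or.inl ⟨hb0, by omega⟩)
  · rintro ⟨haj, hjb⟩ k hkS (⟨hk0, hkj⟩ | ⟨hjk, hk0⟩)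
    · have := hbmin k ⟨hkS, hk0⟩
      omega
    · have := hamax k ⟨hkS, hk0⟩
      omega

end Intervals

section Cells

variable {G X : Type*} [AddGroup G] [AddAction G X] (B : Set X) (e : G)

def cuts (x : X) : Set ℤ := {k | k • e +ᵥ x ∈ B}

/-- The orbit `ℤ • e +ᵥ x` is cut just before each of its points in `B`; the cell of `x` is the
piece containing `x`. -/
def cell (x : X) : Set X := (fun j : ℤ => j • e +ᵥ x) '' {j | Disjoint (Ι 0 j) (cuts B e x)}

variable {B e}

theorem cuts_vadd (j : ℤ) (x : X) : cuts B e (j • e +ᵥ x) = (· + j) ⁻¹' cuts B e x := by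
  ext k
  simp [cuts, vadd_vadd, add_zsmul]

theorem mem_cell_self (x : X) : x ∈ cell B e x := ⟨0, by simp, by simp⟩

theorem cell_eq_of_mem {x y : X} (h : y ∈ cell B e x) : cell B e y = cell B e x := by
  obtain ⟨j, hj, rfl⟩ := h
  have key (m : ℤ) : Disjoint (Ι j m) (cuts B e x) ↔ Disjoint (Ι 0 m) (cuts B e x) :=
    ⟨disjoint_uIoc_trans hj, disjoint_uIoc_trans (by rwa [uIoc_comm])⟩
  ext z
  simp only [cell, cuts_vadd, mem_image, mem_ofPred_eq, Int.disjoint_uIoc_preimage_add_right,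
    zero_add, key, vadd_vadd, ← add_zsmul]
  constructor
  · rintro ⟨i, hi, rfl⟩
    exact ⟨i + j, hi, rfl⟩
  · rintro ⟨m, hm, rfl⟩
    exact ⟨m - j, by simpa using hm, by simp⟩

theorem vadd_mem_of_vadd_notMem_cell {x : X} (h : e +ᵥ x ∉ cell B e x) : e +ᵥ x ∈ B := by
  by_contra hB
  refine h ⟨1, Set.disjoint_left.2 fun k hk hkB => hB ?_, by simp⟩
  obtain rfl : k = 1 := by simp only [mem_uIoc] at hk; omega
  simpa [cuts] using hkB

theorem exists_cell_eq_image_Icc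
    (hB : ∀ x, (∃ k : ℤ, 0 < k ∧ k • e +ᵥ x ∈ B) ∧ ∃ k : ℤ, k ≤ 0 ∧ k • e +ᵥ x ∈ B) (x : X) :
    ∃ a b, a ≤ b ∧ cell B e x = (fun j : ℤ => j • e +ᵥ x) '' Icc a b := by
  obtain ⟨⟨k, hk, hkB⟩, ⟨k', hk', hk'B⟩⟩ := hB x
  obtain ⟨a, b, hab, h⟩ :=
    Int.exists_setOf_disjoint_uIoc_eq_Icc (S := cuts B e x) ⟨k, hkB, hk⟩ ⟨k', hk'B, hk'⟩
  exact ⟨a, b, hab, by rw [cell, h]⟩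

theorem sUnion_range_cell : ⋃₀ range (cell B e) = univ :=
  eq_univ_of_forall fun x => ⟨_, mem_range_self x, mem_cell_self x⟩

theorem cell_inter_cell_eq_empty {x y : X} (h : cell B e x ≠ cell B e y) :
    cell B e x ∩ cell B e y = ∅ :=
  eq_empty_of_forall_notMem fun _ hz => h ((cell_eq_of_mem hz.1).symm.trans (cell_eq_of_mem hz.2))

theorem eq_of_vadd_eq_vadd (hfree : ∀ (x : X) (g : G), g ≠ 0 → g +ᵥ x ≠ x) {g h : G} {x : X}
    (hx : g +ᵥ x = h +ᵥ x) : g = h := by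
  by_contra hne
  refine hfree x (-h + g) (fun h0 => hne (neg_add_eq_zero.1 h0).symm) ?_
  rw [← vadd_vadd, hx, neg_vadd_vadd]

theorem measurableSet_setOf_exists_cell [MeasurableSpace X] [MeasurableConstVAdd G X]
    (hfree : ∀ (x : X) (g : G), g ≠ 0 → g +ᵥ x ≠ x) (hB : MeasurableSet B) (g : G) :
    MeasurableSet {x | ∃ Q ∈ range (cell B e), x ∈ Q ∧ g +ᵥ x ∈ Q} := by
  have : {x | ∃ Q ∈ range (cell B e), x ∈ Q ∧ g +ᵥ x ∈ Q} =
      ⋃ j : ℤ, ⋃ _ : j • e = g, ⋂ k ∈ Ι 0 j, (k • e +ᵥ ·) ⁻¹' Bᶜ := by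
    ext x
    simp only [mem_ofPred_eq, mem_range, exists_exists_eq_and, mem_iUnion, mem_iInter,
      mem_preimage, mem_compl_iff]
    constructor
    · rintro ⟨y, hx, hgx⟩
      rw [← cell_eq_of_mem hx] at hgx
      obtain ⟨j, hj, hjg⟩ := hgx
      exact ⟨j, eq_of_vadd_eq_vadd hfree hjg, fun k hk => Set.disjoint_left.1 hj hk⟩
    · rintro ⟨j, rfl, hj⟩
      exact ⟨x, mem_cell_self x, j, Set.disjoint_left.2 hj, rfl⟩
  rw [this]
  exact .iUnion fun j => .iUnion fun _ =>
    .biInter (to_countable _) fun k _ => measurable_const_vadd _ hB.compl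

end Cells

local notation "e₁" => (![1, 0] : Fin 2 → ℤ)
local notation "e₂" => (![0, 1] : Fin 2 → ℤ)

section Plane

theorem image_zsmul_Icc (a b : ℤ) :
    (fun j : ℤ => j • e₁) '' Icc a b = Icc ![a, 0] ![b, 0] := by
  ext g
  simp only [mem_image, mem_Icc, Pi.le_def, Fin.forall_fin_two]
  constructor
  · rintro ⟨j, ⟨haj, hjb⟩, rfl⟩
    simp [haj, hjb]
  · rintro ⟨⟨ha, h0⟩, hb, h0'⟩
    simp only [Matrix.cons_val_zero, Matrix.cons_val_one, Matrix.cons_val_fin_one] at ha h0 hb h0'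
    refine ⟨g 0, ⟨ha, hb⟩, funext fun i => ?_⟩
    fin_cases i <;> simp; omega

theorem isZRect_Icc {a b : ℤ} (hab : a ≤ b) : IsZRect (Icc ![a, 0] ![b, 0]) :=
  ⟨_, _, by simp [Fin.forall_fin_two, hab], rfl⟩

theorem card_le_three_of_forall_square {T : Finset (Set (Fin 2 → ℤ))} {y : Fin 2 → ℝ}
    (hy : ∀ S ∈ T, y ∈ CubeSet S) (hT : (T : Set (Set (Fin 2 → ℤ))).PairwiseDisjoint id)
    (hsq : ∀ c S₁ S₂ S₃ S₄, S₁ ∈ T → S₂ ∈ T → S₃ ∈ T → S₄ ∈ T → c ∈ S₁ → c + e₁ ∈ S₂ →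
      c + e₂ ∈ S₃ → c + ![1, 1] ∈ S₄ → S₁ = S₂ ∨ S₃ = S₄) :
    T.card ≤ 3 := by
  -- the lattice points within `1 / 2` of `y` are corners of the unit square at `c`
  set c : Fin 2 → ℤ := fun i => ⌈y i - 1 / 2⌉
  have hcorner : ∀ S ∈ T, ∃ p ∈ S, p ∈ Finset.Icc c (c + 1) := by
    intro S hS
    obtain ⟨p, hp, hpy⟩ := hy S hS
    refine ⟨p, hp, Finset.mem_Icc.2 ⟨fun i => Int.ceil_le.2 ?_, fun i => ?_⟩⟩
    · linarith [(abs_le.1 (hpy i)).2]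
    · have : (p i : ℝ) < c i + 2 := by
        linarith [(abs_le.1 (hpy i)).1, Int.le_ceil (y i - 1 / 2)]
      have : p i < c i + 2 := by exact_mod_cast this
      simp only [Pi.add_apply, Pi.one_apply]
      omega
  choose! p hpS hpc using hcorner
  have hinj : Set.InjOn p T := fun S hS S' hS' h =>
    hT.elim hS hS' (not_disjoint_iff.2 ⟨p S, hpS S hS, h ▸ hpS S' hS'⟩)
  have hss : T.image p ⊂ Finset.Icc c (c + 1) := by
    refine (Finset.image_subset_iff.2 hpc).ssubset_of_ne fun h => ?_
    have hmem (d : Fin 2 → ℤ) (hd : ∀ i, 0 ≤ d i ∧ d i ≤ 1) : ∃ S ∈ T, p S = c + d := by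
      refine Finset.mem_image.1 (h ▸ Finset.mem_Icc.2 ⟨fun i => ?_, fun i => ?_⟩) <;>
        simp only [Pi.add_apply, Pi.one_apply] <;> linarith [hd i]
    obtain ⟨S₁, h₁, hp₁⟩ := hmem 0 (by simp)
    obtain ⟨S₂, h₂, hp₂⟩ := hmem e₁ (by simp [Fin.forall_fin_two])
    obtain ⟨S₃, h₃, hp₃⟩ := hmem e₂ (by simp [Fin.forall_fin_two])
    obtain ⟨S₄, h₄, hp₄⟩ := hmem ![1, 1] (by simp [Fin.forall_fin_two])
    rw [add_zero] at hp₁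
    rcases hsq c S₁ S₂ S₃ S₄ h₁ h₂ h₃ h₄ (hp₁ ▸ hpS S₁ h₁) (hp₂ ▸ hpS S₂ h₂) (hp₃ ▸ hpS S₃ h₃)
      (hp₄ ▸ hpS S₄ h₄) with rfl | rfl
    · simpa using congrFun (left_eq_add.1 (hp₁.symm.trans hp₂)) 0
    · simpa using congrFun (add_left_cancel (hp₃.symm.trans hp₄)) 0
  have hcard : (Finset.Icc c (c + 1)).card = 4 := by
    simp [Pi.card_Icc, add_sub_cancel_left, add_assoc]
  have := Finset.card_lt_card hss
  rw [Finset.card_image_of_injOn hinj, hcard] at this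
  omega

end Plane

section FreeAction

variable {X : Type*} [AddAction (Fin 2 → ℤ) X]

theorem card_le_three_of_cells {B : Set X} (hfree : ∀ (x : X) (g : Fin 2 → ℤ), g ≠ 0 → g +ᵥ x ≠ x)
    (hB : ∀ b ∈ B, e₂ +ᵥ b ∉ B) (x : X) (y : Fin 2 → ℝ) (T : Finset (Set (Fin 2 → ℤ)))
    (hT : ∀ S ∈ T, (fun g => g +ᵥ x) '' S ∈ range (cell B e₁) ∧ y ∈ CubeSet S) :
    T.card ≤ 3 := by
  have hpre : ∀ S ∈ T, ∀ g ∈ S, S = (· +ᵥ x) ⁻¹' cell B e₁ (g +ᵥ x) := by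
    intro S hS g hg
    obtain ⟨z, hz⟩ := (hT S hS).1
    rw [cell_eq_of_mem (hz ▸ mem_image_of_mem _ hg), hz,
      preimage_image_eq _ fun _ _ => eq_of_vadd_eq_vadd hfree]
  -- neighbours in different members of `T` are separated by a cut
  have hcut : ∀ S ∈ T, ∀ S' ∈ T, ∀ g ∈ S, g + e₁ ∈ S' → S ≠ S' →
      (g + e₁) +ᵥ x ∈ B := by
    intro S hS S' hS' g hg hg' hne
    rw [add_comm, ← vadd_vadd]
    refine vadd_mem_of_vadd_notMem_cell fun h => hne ?_
    rw [hpre S hS g hg, hpre S' hS' _ hg', add_comm, ← vadd_vadd, cell_eq_of_mem h]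
  refine card_le_three_of_forall_square (fun S hS => (hT S hS).2) ?_ ?_
  · intro S hS S' hS' hne
    exact Set.disjoint_left.2 fun g hg hg' => hne ((hpre S hS g hg).trans (hpre S' hS' g hg').symm)
  · intro c S₁ S₂ S₃ S₄ h₁ h₂ h₃ h₄ hc₁ hc₂ hc₃ hc₄
    by_contra! hne
    have hc₄' : c + e₂ + e₁ ∈ S₄ := by
      rwa [add_assoc, show (e₂ + e₁ : Fin 2 → ℤ) = ![1, 1] by simp]
    refine hB _ (hcut S₁ h₁ S₂ h₂ c hc₁ hc₂ hne.1) ?_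
    convert hcut S₃ h₃ S₄ h₄ _ hc₃ hc₄' hne.2 using 1
    rw [vadd_vadd]
    abel_nf

variable [TopologicalSpace X] [SecondCountableTopology X] [T1Space X] [MeasurableSpace X]
  [OpensMeasurableSpace X] [MeasurableConstVAdd (Fin 2 → ℤ) X]

theorem exists_measurableSet_cut (hfree : ∀ (x : X) (g : Fin 2 → ℤ), g ≠ 0 → g +ᵥ x ≠ x) :
    ∃ B : Set X, MeasurableSet B ∧ (∀ b ∈ B, e₂ +ᵥ b ∉ B) ∧ ∀ x,
      (∃ k : ℤ, 0 < k ∧ k • e₁ +ᵥ x ∈ B) ∧ ∃ k : ℤ, k ≤ 0 ∧ k • e₁ +ᵥ x ∈ B := by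
  obtain ⟨γ, hγm, hγ⟩ := exists_measurable_coloring_of_ne
    (f := fun (v : ((Finset.Icc (-4) 4).erase 0 : Finset (Fin 2 → ℤ))) x => (v : Fin 2 → ℤ) +ᵥ x)
    (fun _ => measurable_const_vadd _) fun v x => hfree x v (Finset.ne_of_mem_erase v.2)
  -- one colouring, proper for all moves in the box `[-4, 4]²`, serves both greedy constructions
  have hγ' (x : X) (g : Fin 2 → ℤ) (hg : g ≠ 0) (hg4 : ∀ i, |g i| ≤ 4) : γ (g +ᵥ x) ≠ γ x :=
    hγ ⟨g, Finset.mem_erase.2 ⟨hg, Finset.mem_Icc.2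
      ⟨fun i => (abs_le.1 (hg4 i)).1, fun i => (abs_le.1 (hg4 i)).2⟩⟩⟩ x
  set V : Finset (Fin 2 → ℤ) := ((Finset.Icc (-4 : ℤ) 4).erase 0).image (· • e₁)
  have hV (k : ℤ) (hk : k ≠ 0) (hk4 : |k| ≤ 4) : k • e₁ ∈ V :=
    Finset.mem_image_of_mem _ (Finset.mem_erase.2 ⟨hk, Finset.mem_Icc.2 (abs_le.1 hk4)⟩)
  obtain ⟨M, hMm, hMsep, hMdom⟩ := exists_measurableSet_maximal_independent (V := V)
    (by
      simp only [V, Finset.mem_image, Finset.mem_erase, Finset.mem_Icc]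
      rintro _ ⟨k, ⟨hk0, hk⟩, rfl⟩
      exact ⟨-k, ⟨neg_ne_zero.2 hk0, by omega, by omega⟩, neg_zsmul e₁ k⟩)
    hγm (by
      simp only [V, Finset.mem_image, Finset.mem_erase, Finset.mem_Icc]
      rintro x _ ⟨k, ⟨hk0, hk⟩, rfl⟩
      refine hγ' x _ (by simpa using hk0) ?_
      simp [Fin.forall_fin_two, abs_le, hk])
  refine exists_measurableSet_cut_of_marker hMm (fun x hx k hk hk4 => hMsep x hx _ (hV k hk hk4))
    (fun x => ?_) hγm fun x t ht => hγ' x _ (by simp) ?_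
  · by_cases hx : x ∈ M
    · exact ⟨0, by simp, by simpa using hx⟩
    · obtain ⟨_, hv, hvx⟩ := hMdom x hx
      simp only [V, Finset.mem_image, Finset.mem_erase, Finset.mem_Icc] at hv
      obtain ⟨k, ⟨-, hk⟩, rfl⟩ := hv
      exact ⟨k, abs_le.2 hk, hvx⟩
  · simpa [Fin.forall_fin_two] using ht.trans (by norm_num)

end FreeAction

/-- for every free Borel action of `ℤ²` on a Polish space `X` there is a Borel
minimal (i.e. `3`-regulated) regulated partition of `X`. -/
theorem stmt19 (X : Type) [TopologicalSpace X] [PolishSpace X]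
    [MeasurableSpace X] [BorelSpace X]
    (act : (Fin 2 → ℤ) → X → X)
    (hzero : ∀ x, act 0 x = x)
    (hadd : ∀ g h x, act (g + h) x = act g (act h x))
    (hBorel : ∀ g, Measurable (act g))
    (hfree : ∀ (x : X) (g : Fin 2 → ℤ), g ≠ 0 → act g x ≠ x) :
    ∃ P : Set (Set X),
      (∀ Q ∈ P, ∃ (x : X) (S : Set (Fin 2 → ℤ)),
          IsZRect S ∧ Q = (fun g => act g x) '' S) ∧
      (⋃₀ P = Set.univ) ∧
      (∀ Q₁ ∈ P, ∀ Q₂ ∈ P, Q₁ ≠ Q₂ → Q₁ ∩ Q₂ = ∅) ∧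
      (∀ g : Fin 2 → ℤ, MeasurableSet {x : X | ∃ Q ∈ P, x ∈ Q ∧ act g x ∈ Q}) ∧
      (∀ (x : X) (y : Fin 2 → ℝ) (T : Finset (Set (Fin 2 → ℤ))),
        (∀ S ∈ T, ((fun g => act g x) '' S) ∈ P ∧ y ∈ CubeSet S) → T.card ≤ 3) := by
  let _ : AddAction (Fin 2 → ℤ) X := { vadd := act, zero_vadd := hzero, add_vadd := hadd }
  have _ : MeasurableConstVAdd (Fin 2 → ℤ) X := ⟨hBorel⟩
  obtain ⟨B, hBm, hBsep, hBcut⟩ := exists_measurableSet_cut (X := X) hfree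
  refine ⟨range (cell B e₁), ?_, sUnion_range_cell, ?_,
    measurableSet_setOf_exists_cell hfree hBm, card_le_three_of_cells hfree hBsep⟩
  · rintro _ ⟨x, rfl⟩
    obtain ⟨a, b, hab, h⟩ := exists_cell_eq_image_Icc hBcut x
    exact ⟨x, _, isZRect_Icc hab, by rw [h, ← image_zsmul_Icc, image_image]; rfl⟩
  · rintro _ ⟨x, rfl⟩ _ ⟨y, rfl⟩ hne
    exact cell_inter_cell_eq_empty hne
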